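/- arXiv:2109.10880 — 4 statements merged into one kernel-verified Lean document; each statement's English description precedes it below -/
import Mathlib

section
/- Courant–Fischer theorem for T-product tensors: Let C be a symmetric T-product tensor in R^{m×m×p}, block-diagonalized by the DFT into Hermitian matrices C_1,...,C_p. Given positive integers k_1,...,k_p with 1 ≤ k_i ≤ m, let λ_k̃ = min_i λ_{i,k_i} (where λ_{i,j} is the j-th largest eigenvalue of C_i). Then λ_k̃ = max over subspaces S ⊂ R^{m×1×p} whose i-th Fourier-component has dimension k_i, of min over nonzero X ∈ S of ⟨X, C ⋆ X⟩/⟨X, X⟩. -/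
open scoped BigOperators
open Matrix

/-- The Rayleigh quotient `⟨X, C ⋆ X⟩ / ⟨X, X⟩` of a symmetric T-product tensor,
expressed through its Fourier components: the blocks `C i` of the DFT
block-diagonalization and the Fourier components `x i` of the tensor `X ∈ R^{m×1×p}`
(the common factor `1/p` in numerator and denominator cancels). -/
noncomputable def rayleigh {m p : ℕ} (C : Fin p → Matrix (Fin m) (Fin m) ℂ)
    (x : Fin p → Fin m → ℂ) : ℝ :=
  (∑ i, ∑ a, star (x i a) * ((C i).mulVec (x i)) a).re /
    ∑ i, ∑ a, ‖x i a‖ ^ 2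

/-!
In the eigenbasis of each block, `y i = (V i)ᴴ *ᵥ x i`, the Rayleigh quotient is the average of
the eigenvalues `μ i j` weighted by `‖y i j‖ ^ 2`. Hence it is at least `min_i μ i (k i)` on the
span of the top `k i + 1` eigenvectors of every block, with equality at an eigenvector of a
minimizing block. Conversely, a `(k i + 1)`-dimensional `S i` contains a nonzero vector orthogonal
to the top `k i` eigenvectors of block `i`; placed in block `i` alone, its quotient is at most
`μ i (k i)`.
-/

section WeightedAverage

variable {ι : Type*} [Fintype ι] {w a : ι → ℝ} {c : ℝ}

lemma le_sum_mul_div_sum (hw : 0 < w) (h : ∀ i, w i ≠ 0 → c ≤ a i) :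
    c ≤ (∑ i, a i * w i) / ∑ i, w i := by
  rw [le_div_iff₀ (Fintype.sum_pos hw), Finset.mul_sum]
  refine Finset.sum_le_sum fun i _ => ?_
  rcases eq_or_ne (w i) 0 with h0 | h0
  · simp [h0]
  · exact mul_le_mul_of_nonneg_right (h i h0) (hw.le i)

lemma sum_mul_div_sum_le (hw : 0 < w) (h : ∀ i, w i ≠ 0 → a i ≤ c) :
    (∑ i, a i * w i) / ∑ i, w i ≤ c := by
  rw [div_le_iff₀ (Fintype.sum_pos hw), Finset.mul_sum]
  refine Finset.sum_le_sum fun i _ => ?_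
  rcases eq_or_ne (w i) 0 with h0 | h0
  · simp [h0]
  · exact mul_le_mul_of_nonneg_right (h i h0) (hw.le i)

end WeightedAverage

section Unitary

variable {n : Type*} [Fintype n]

lemma star_dotProduct_self_eq_sum_norm_sq (z : n → ℂ) :
    star z ⬝ᵥ z = ((∑ j, ‖z j‖ ^ 2 : ℝ) : ℂ) := by
  push_cast
  exact Finset.sum_congr rfl fun j _ => by
    rw [Pi.star_apply, mul_comm, Complex.star_def, Complex.mul_conj']

variable [DecidableEq n]

lemma star_dotProduct_mul_diagonal_mul_conjTranspose_mulVec (V : Matrix n n ℂ) (μ : n → ℝ)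
    (x : n → ℂ) :
    star x ⬝ᵥ (V * diagonal (fun j => (μ j : ℂ)) * Vᴴ) *ᵥ x =
      ((∑ j, μ j * ‖(Vᴴ *ᵥ x) j‖ ^ 2 : ℝ) : ℂ) := by
  rw [← mulVec_mulVec, ← mulVec_mulVec, dotProduct_mulVec, ← conjTranspose_conjTranspose V,
    ← star_mulVec, conjTranspose_conjTranspose]
  push_cast
  refine Finset.sum_congr rfl fun j _ => ?_
  rw [mulVec_diagonal, Pi.star_apply, Complex.star_def, ← Complex.mul_conj']
  ring

lemma conjTranspose_mulVec_mulVec {V : Matrix n n ℂ} (hV : V ∈ unitaryGroup n ℂ) (y : n → ℂ) :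
    Vᴴ *ᵥ (V *ᵥ y) = y := by
  rw [mulVec_mulVec, ← star_eq_conjTranspose, mem_unitaryGroup_iff'.mp hV, one_mulVec]

lemma sum_norm_sq_conjTranspose_mulVec {V : Matrix n n ℂ} (hV : V ∈ unitaryGroup n ℂ)
    (x : n → ℂ) : ∑ j, ‖(Vᴴ *ᵥ x) j‖ ^ 2 = ∑ j, ‖x j‖ ^ 2 := by
  have hV' : Vᴴ ∈ unitaryGroup n ℂ := by
    rw [← star_eq_conjTranspose]; exact Unitary.star_mem hV
  have h := star_dotProduct_self_eq_sum_norm_sq (Vᴴ *ᵥ x)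
  rw [star_mulVec, ← dotProduct_mulVec, conjTranspose_mulVec_mulVec hV',
    star_dotProduct_self_eq_sum_norm_sq] at h
  exact_mod_cast h.symm

end Unitary

section Subspaces

open Module

lemma single_mem_of_mem {R ι : Type*} [Semiring R] [DecidableEq ι] {M : ι → Type*}
    [∀ i, AddCommMonoid (M i)] [∀ i, Module R (M i)] {S : ∀ i, Submodule R (M i)} {i : ι}
    {v : M i} (hv : v ∈ S i) : ∀ i', Pi.single i v i' ∈ S i' := fun i' => by
  rcases eq_or_ne i' i with rfl | hi'
  · simpa using hv
  · simp [hi']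

lemma exists_mem_ne_zero_forall_mem_apply_eq_zero {K M n : Type*} [Field K] [AddCommGroup M]
    [Module K M] (f : M →ₗ[K] n → K) (S : Submodule K M) [FiniteDimensional K S] (s : Finset n)
    (h : s.card < finrank K S) : ∃ v ∈ S, v ≠ 0 ∧ ∀ j ∈ s, f v j = 0 := by
  let g : S →ₗ[K] s → K := LinearMap.funLeft K K ((↑) : s → n) ∘ₗ f ∘ₗ S.subtype
  have hg : LinearMap.ker g ≠ ⊥ :=
    LinearMap.ker_ne_bot_of_finrank_lt (by simpa [Module.finrank_fintype_fun_eq_card] using h)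
  obtain ⟨⟨v, hvS⟩, hv, hv0⟩ := Submodule.exists_mem_ne_zero_of_ne_bot hg
  refine ⟨v, hvS, fun h0 => hv0 (by simp [h0]), fun j hj => ?_⟩
  exact congrFun (LinearMap.mem_ker.mp hv) ⟨j, hj⟩

variable {K n : Type*} [Field K] [StarRing K] [Fintype n]

/-- For unitary `V`, the span of the columns `V.col j` with `j ∈ s`. -/
def spectralSubspace (V : Matrix n n K) (s : Finset n) : Submodule K (n → K) :=
  (⨅ j ∈ (↑s : Set n)ᶜ, LinearMap.ker (LinearMap.proj j)).comap (mulVecLin Vᴴ)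

lemma mem_spectralSubspace {V : Matrix n n K} {s : Finset n} {x : n → K} :
    x ∈ spectralSubspace V s ↔ ∀ j ∉ s, (Vᴴ *ᵥ x) j = 0 := by
  simp [spectralSubspace]

variable [DecidableEq n]

lemma finrank_spectralSubspace {V : Matrix n n K} (hV : V ∈ unitaryGroup n K) (s : Finset n) :
    finrank K (spectralSubspace V s) = s.card := by
  let e := UnitaryGroup.toLinearEquiv (star ⟨V, hV⟩ : unitaryGroup n K)
  have hcoord := (LinearMap.iInfKerProjEquiv K (fun _ : n => K) (I := ↑s)
    disjoint_compl_right (by simp)).finrank_eq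
  rw [Module.finrank_fintype_fun_eq_card] at hcoord
  rw [spectralSubspace, show mulVecLin Vᴴ = (e : (n → K) →ₗ[K] n → K) from rfl,
    Submodule.comap_equiv_eq_map_symm, LinearEquiv.finrank_map_eq, hcoord]
  simp

end Subspaces

section Rayleigh

variable {m p : ℕ} {C V : Fin p → Matrix (Fin m) (Fin m) ℂ} {μ : Fin p → Fin m → ℝ}

lemma rayleigh_eq_of_eigendecomposition (hV : ∀ i, V i ∈ unitaryGroup (Fin m) ℂ)
    (hC : ∀ i, C i = V i * diagonal (fun j => (μ i j : ℂ)) * (V i)ᴴ) (x : Fin p → Fin m → ℂ) :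
    rayleigh C x = (∑ ij : Fin p × Fin m, μ ij.1 ij.2 * ‖((V ij.1)ᴴ *ᵥ x ij.1) ij.2‖ ^ 2) /
      ∑ ij : Fin p × Fin m, ‖((V ij.1)ᴴ *ᵥ x ij.1) ij.2‖ ^ 2 := by
  have hquad : ∀ i, ∑ a, star (x i a) * (C i *ᵥ x i) a =
      ((∑ j, μ i j * ‖((V i)ᴴ *ᵥ x i) j‖ ^ 2 : ℝ) : ℂ) := fun i => by
    rw [hC i]
    exact star_dotProduct_mul_diagonal_mul_conjTranspose_mulVec (V i) (μ i) (x i)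
  rw [Fintype.sum_prod_type' fun i j => μ i j * ‖((V i)ᴴ *ᵥ x i) j‖ ^ 2,
    Fintype.sum_prod_type' fun i j => ‖((V i)ᴴ *ᵥ x i) j‖ ^ 2, rayleigh]
  simp only [hquad, ← Complex.ofReal_sum, Complex.ofReal_re,
    sum_norm_sq_conjTranspose_mulVec (hV _)]

lemma eigenweights_pos (hV : ∀ i, V i ∈ unitaryGroup (Fin m) ℂ) {x : Fin p → Fin m → ℂ}
    (hx : x ≠ 0) : 0 < fun ij : Fin p × Fin m => ‖((V ij.1)ᴴ *ᵥ x ij.1) ij.2‖ ^ 2 := by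
  obtain ⟨i, hi⟩ := Function.ne_iff.mp hx
  have hy : (V i)ᴴ *ᵥ x i ≠ 0 := fun h0 => hi <| by
    rw [← one_mulVec (x i), ← mem_unitaryGroup_iff.mp (hV i), star_eq_conjTranspose,
      ← mulVec_mulVec, h0, mulVec_zero, Pi.zero_apply]
  obtain ⟨j, hj⟩ := Function.ne_iff.mp hy
  exact Pi.lt_def.mpr ⟨fun _ => by positivity, (i, j), pow_pos (norm_pos_iff.mpr hj) 2⟩

lemma le_rayleigh (hV : ∀ i, V i ∈ unitaryGroup (Fin m) ℂ)
    (hC : ∀ i, C i = V i * diagonal (fun j => (μ i j : ℂ)) * (V i)ᴴ)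
    {x : Fin p → Fin m → ℂ} (hx : x ≠ 0) {c : ℝ}
    (h : ∀ i j, ((V i)ᴴ *ᵥ x i) j ≠ 0 → c ≤ μ i j) : c ≤ rayleigh C x := by
  rw [rayleigh_eq_of_eigendecomposition hV hC]
  exact le_sum_mul_div_sum (eigenweights_pos hV hx) fun ij hij => h ij.1 ij.2 (by simpa using hij)

lemma rayleigh_single_le (hV : ∀ i, V i ∈ unitaryGroup (Fin m) ℂ)
    (hC : ∀ i, C i = V i * diagonal (fun j => (μ i j : ℂ)) * (V i)ᴴ)
    {i : Fin p} {v : Fin m → ℂ} (hv : v ≠ 0) {c : ℝ}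
    (h : ∀ j, ((V i)ᴴ *ᵥ v) j ≠ 0 → μ i j ≤ c) : rayleigh C (Pi.single i v) ≤ c := by
  rw [rayleigh_eq_of_eigendecomposition hV hC]
  refine sum_mul_div_sum_le (eigenweights_pos hV (by simpa using hv)) ?_
  rintro ⟨i', j⟩ hij
  rcases eq_or_ne i' i with rfl | hi'
  · exact h j (by simpa using hij)
  · simp [hi'] at hij

end Rayleigh

/-- Courant–Fischer for T-product tensors: let `C` be a symmetric
T-product tensor whose DFT block-diagonalization has Hermitian blocks `C i`
with unitary eigendecomposition `C i = V i * diagonal (μ i) * (V i)ᴴ` and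
eigenvalues `μ i 0 ≥ μ i 1 ≥ ⋯` (so `μ i (k i)` is the `(k i + 1)`-th largest
eigenvalue of `C i`, i.e. `λ_{i,k_i}` with `k_i := k i + 1`).  Then
`λ_k̃ = min_i λ_{i,k_i}` is the maximum, over families of Fourier-component
subspaces `S i` of dimension `k i + 1`, of the minimum of the Rayleigh quotient
over nonzero `X` with `x i ∈ S i`. -/
theorem courant_fischer_tproduct {m p : ℕ} [NeZero p]
    (C V : Fin p → Matrix (Fin m) (Fin m) ℂ)
    (μ : Fin p → Fin m → ℝ)
    (hV : ∀ i, V i ∈ Matrix.unitaryGroup (Fin m) ℂ)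
    (hμ : ∀ i, Antitone (μ i))
    (hC : ∀ i, C i = V i * Matrix.diagonal (fun j => (μ i j : ℂ)) * (V i)ᴴ)
    (k : Fin p → Fin m) :
    IsGreatest
      {r : ℝ | ∃ S : (i : Fin p) → Submodule ℂ (Fin m → ℂ),
        (∀ i, Module.finrank ℂ (S i) = (k i : ℕ) + 1) ∧
        IsLeast {q : ℝ | ∃ x : (i : Fin p) → Fin m → ℂ,
          (∀ i, x i ∈ S i) ∧ x ≠ 0 ∧ q = rayleigh C x} r}
      (⨅ i, μ i (k i)) := by
  obtain ⟨i₀, hi₀⟩ := Finite.exists_min fun i => μ i (k i)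
  rw [le_antisymm (ciInf_le (Set.finite_range _).bddBelow i₀) (le_ciInf hi₀)]
  let S₀ i := spectralSubspace (V i) (Finset.Iic (k i))
  have hlower : ∀ x, (∀ i, x i ∈ S₀ i) → x ≠ 0 → μ i₀ (k i₀) ≤ rayleigh C x :=
    fun x hx hx0 => le_rayleigh hV hC hx0 fun i j hj => (hi₀ i).trans <| hμ i <|
      Finset.mem_Iic.mp <| by_contra fun hjk => hj (mem_spectralSubspace.mp (hx i) j hjk)
  set v₀ := V i₀ *ᵥ Pi.single (k i₀) 1
  have hv₀ : (V i₀)ᴴ *ᵥ v₀ = Pi.single (k i₀) 1 := conjTranspose_mulVec_mulVec (hV i₀) _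
  have hv₀0 : v₀ ≠ 0 := fun h => by simpa [h] using congrFun hv₀ (k i₀)
  have hv₀S : v₀ ∈ S₀ i₀ := mem_spectralSubspace.mpr fun j hj => by
    rw [hv₀, Pi.single_eq_of_ne (by rintro rfl; simp at hj)]
  have hx₀ : rayleigh C (Pi.single i₀ v₀) ≤ μ i₀ (k i₀) :=
    rayleigh_single_le hV hC hv₀0 fun j hj => by
      obtain rfl : j = k i₀ := by by_contra hne; simp [hv₀, hne] at hj
      exact le_rfl
  refine ⟨⟨S₀, fun i => ?_, ⟨Pi.single i₀ v₀, single_mem_of_mem hv₀S, by simpa, ?_⟩, ?_⟩, ?_⟩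
  · simp [S₀, finrank_spectralSubspace (hV i)]
  · exact le_antisymm (hlower _ (single_mem_of_mem hv₀S) (by simpa)) hx₀
  · rintro q ⟨x, hx, hx0, rfl⟩
    exact hlower x hx hx0
  · rintro r ⟨S, hS, -, hlb⟩
    obtain ⟨v, hvS, hv0, hv⟩ := exists_mem_ne_zero_forall_mem_apply_eq_zero
      (mulVecLin (V i₀)ᴴ) (S i₀) (Finset.Iio (k i₀)) (by rw [Fin.card_Iio, hS]; omega)
    refine (hlb ⟨Pi.single i₀ v, single_mem_of_mem hvS, by simpa, rfl⟩).trans ?_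
    exact rayleigh_single_le hV hC hv0 fun j hj =>
      hμ i₀ (not_lt.mp fun hjk => hj (hv j (Finset.mem_Iio.mpr hjk)))
end

section
/- Generalized Hölder inequality for symmetric gauge functions: Let ρ: R_{≥0}^r → R_{≥0} be a symmetric gauge function. For n nonnegative vectors b_1,...,b_n ∈ R_{≥0}^r and weights α_1,...,α_n > 0 with Σ α_i = 1, one has ρ(Π_i b_{i,1}^{α_i}, ..., Π_i b_{i,r}^{α_i}) ≤ Π_{i=1}^n ρ(b_i)^{α_i}. -/
open scoped BigOperators

/-- A symmetric gauge function on `ℝ^r`: a norm on `Fin r → ℝ` that is invariant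
under permutations of coordinates and under taking absolute values entrywise
(so it corresponds, via von Neumann's theorem, to a unitarily invariant norm). -/
structure SymmGauge (r : ℕ) where
  toFun : (Fin r → ℝ) → ℝ
  nonneg : ∀ x, 0 ≤ toFun x
  triangle : ∀ x y, toFun (x + y) ≤ toFun x + toFun y
  homog : ∀ (c : ℝ) (x), toFun (c • x) = |c| * toFun x
  pos_of_ne_zero : ∀ x, x ≠ 0 → 0 < toFun x
  perm_invariant : ∀ (σ : Equiv.Perm (Fin r)) (x), toFun (x ∘ σ) = toFun x
  abs_invariant : ∀ x, toFun (fun i => |x i|) = toFun x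

/-!
Normalise each `bᵢ` to `ρ`-size one. For unit vectors, weighted AM–GM bounds the geometric mean
coordinatewise by the arithmetic mean `∑ αᵢ bᵢ`; a symmetric gauge is monotone in the absolute
values of the coordinates, and convex, so `ρ (∑ αᵢ bᵢ) ≤ ∑ αᵢ ρ bᵢ ≤ 1`. Scaling back gives the
product `∏ ρ(bᵢ)^{αᵢ}`.
If some `ρ bᵢ = 0`, then `bᵢ = 0` and the left side vanishes since `αᵢ > 0`.
-/

open Finset Function

namespace SymmGauge

variable {r : ℕ} (ρ : SymmGauge r)

def toSeminorm : Seminorm ℝ (Fin r → ℝ) :=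
  Seminorm.of ρ.toFun ρ.triangle fun c x => by rw [ρ.homog, Real.norm_eq_abs]

theorem convexOn : ConvexOn ℝ Set.univ ρ.toFun :=
  ρ.toSeminorm.convexOn

theorem map_zero : ρ.toFun 0 = 0 :=
  _root_.map_zero ρ.toSeminorm

theorem eq_zero_of_toFun_eq_zero {x : Fin r → ℝ} (hx : ρ.toFun x = 0) : x = 0 := by
  by_contra h
  exact (ρ.pos_of_ne_zero x h).ne' hx

theorem toFun_update_of_abs_eq (x : Fin r → ℝ) (j : Fin r) {t : ℝ} (ht : |t| = |x j|) :
    ρ.toFun (update x j t) = ρ.toFun x := by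
  rw [← ρ.abs_invariant, ← ρ.abs_invariant x]
  congr 1
  funext i
  rcases eq_or_ne i j with rfl | hij
  · simp [ht]
  · simp [hij]

theorem toFun_update_le (x : Fin r → ℝ) (j : Fin r) {t : ℝ} (ht : |t| ≤ |x j|) :
    ρ.toFun (update x j t) ≤ ρ.toFun x := by
  -- `ρ` is convex along the `j`-th coordinate and takes the value `ρ x` at both ends `±|x j|`.
  obtain ⟨a, b, ha, hb, hab, rfl⟩ : t ∈ segment ℝ (-|x j|) |x j| := by
    rw [segment_eq_Icc (neg_le_self (abs_nonneg _))]
    exact abs_le.mp ht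
  have hcombo : update x j (a • -|x j| + b • |x j|)
      = a • update x j (-|x j|) + b • update x j |x j| := by
    rw [← update_smul, ← update_smul, ← update_add, Convex.combo_self hab]
  calc ρ.toFun (update x j (a • -|x j| + b • |x j|))
      ≤ max (ρ.toFun (update x j (-|x j|))) (ρ.toFun (update x j |x j|)) := by
        rw [hcombo]
        exact ρ.convexOn.le_on_segment' trivial trivial ha hb hab
    _ = ρ.toFun x := by
        rw [ρ.toFun_update_of_abs_eq x j (by simp), ρ.toFun_update_of_abs_eq x j (by simp),
          max_self]

theorem toFun_le_of_abs_le {x y : Fin r → ℝ} (h : ∀ j, |x j| ≤ |y j|) :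
    ρ.toFun x ≤ ρ.toFun y := by
  suffices ∀ s : Finset (Fin r), ρ.toFun (s.piecewise x y) ≤ ρ.toFun y by
    simpa using this univ
  intro s
  induction s using Finset.induction_on with
  | empty => simp
  | insert j s hj ih =>
    rw [piecewise_insert]
    refine (ρ.toFun_update_le _ j ?_).trans ih
    rw [piecewise_eq_of_notMem s x y hj]
    exact h j

theorem toFun_mono {x y : Fin r → ℝ} (hx : 0 ≤ x) (hxy : x ≤ y) : ρ.toFun x ≤ ρ.toFun y :=
  ρ.toFun_le_of_abs_le fun j => abs_le_abs_of_nonneg (hx j) (hxy j)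

variable {ι : Type*} [Fintype ι] {b : ι → Fin r → ℝ} {α : ι → ℝ}

theorem toFun_geomMean_le_one (hb : ∀ i j, 0 ≤ b i j) (hρb : ∀ i, ρ.toFun (b i) ≤ 1)
    (hα : ∀ i, 0 ≤ α i) (hsum : ∑ i, α i = 1) :
    ρ.toFun (fun j => ∏ i, b i j ^ α i) ≤ 1 := by
  have hamgm : (fun j => ∏ i, b i j ^ α i) ≤ ∑ i, α i • b i := fun j => by
    simpa using Real.geom_mean_le_arith_mean_weighted univ α (b · j)
      (fun i _ => hα i) hsum (fun i _ => hb i j)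
  calc ρ.toFun (fun j => ∏ i, b i j ^ α i)
      ≤ ρ.toFun (∑ i, α i • b i) :=
        ρ.toFun_mono (fun j => prod_nonneg fun i _ => Real.rpow_nonneg (hb i j) _) hamgm
    _ ≤ ∑ i, α i • ρ.toFun (b i) :=
        ρ.convexOn.map_sum_le (fun i _ => hα i) hsum fun _ _ => trivial
    _ ≤ ∑ i, α i • (1 : ℝ) := by gcongr with i; exacts [hα i, hρb i]
    _ = 1 := by simp [hsum]

theorem toFun_geomMean_le_of_pos (hb : ∀ i j, 0 ≤ b i j) (hρb : ∀ i, 0 < ρ.toFun (b i))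
    (hα : ∀ i, 0 ≤ α i) (hsum : ∑ i, α i = 1) :
    ρ.toFun (fun j => ∏ i, b i j ^ α i) ≤ ∏ i, ρ.toFun (b i) ^ α i := by
  set u : ι → Fin r → ℝ := fun i => (ρ.toFun (b i))⁻¹ • b i
  have hu : ∀ i j, 0 ≤ u i j := fun i j => mul_nonneg (inv_nonneg.mpr (hρb i).le) (hb i j)
  have hρu : ∀ i, ρ.toFun (u i) ≤ 1 := fun i => by
    rw [ρ.homog, abs_inv, abs_of_pos (hρb i), inv_mul_cancel₀ (hρb i).ne']
  have hscale : (fun j => ∏ i, b i j ^ α i)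
      = (∏ i, ρ.toFun (b i) ^ α i) • fun j => ∏ i, u i j ^ α i := by
    funext j
    simp only [Pi.smul_apply, smul_eq_mul, ← prod_mul_distrib]
    refine prod_congr rfl fun i _ => ?_
    rw [← Real.mul_rpow (hρb i).le (hu i j)]
    simp only [u, Pi.smul_apply, smul_eq_mul, mul_inv_cancel_left₀ (hρb i).ne']
  have hprod : 0 ≤ ∏ i, ρ.toFun (b i) ^ α i :=
    prod_nonneg fun i _ => Real.rpow_nonneg (ρ.nonneg _) _
  rw [hscale, ρ.homog, abs_of_nonneg hprod]
  exact mul_le_of_le_one_right hprod (ρ.toFun_geomMean_le_one hu hρu hα hsum)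

end SymmGauge

/-- generalized Hölder inequality for symmetric gauge functions:
for nonnegative vectors `b 1, …, b n ∈ ℝ^r` and weights `α i > 0` with `∑ α i = 1`,
`ρ (∏ᵢ bᵢ^{αᵢ})` (entrywise weighted geometric mean) is at most `∏ᵢ ρ(bᵢ)^{αᵢ}`. -/
theorem symmGauge_holder {r n : ℕ} (ρ : SymmGauge r)
    (b : Fin n → Fin r → ℝ) (hb : ∀ i j, 0 ≤ b i j)
    (α : Fin n → ℝ) (hα : ∀ i, 0 < α i) (hsum : ∑ i, α i = 1) :
    ρ.toFun (fun j => ∏ i, b i j ^ α i) ≤ ∏ i, ρ.toFun (b i) ^ α i := by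
  by_cases hpos : ∀ i, 0 < ρ.toFun (b i)
  · exact ρ.toFun_geomMean_le_of_pos hb hpos (fun i => (hα i).le) hsum
  obtain ⟨i₀, hi₀⟩ := not_forall.mp hpos
  have hb₀ : b i₀ = 0 := ρ.eq_zero_of_toFun_eq_zero ((not_lt.mp hi₀).antisymm (ρ.nonneg _))
  have hzero : (fun j => ∏ i, b i j ^ α i) = 0 := funext fun j =>
    prod_eq_zero (mem_univ i₀) (by simp [hb₀, (hα i₀).ne'])
  rw [hzero, ρ.map_zero]
  exact prod_nonneg fun i _ => Real.rpow_nonneg (ρ.nonneg _) _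
end

section
/- Singular value weak majorization for sums of T-product tensors: For symmetric T-product tensors C, D ∈ R^{m×m×p}, the ordered vector of T-singular values satisfies σ(C + D) ≺_w σ(C) + σ(D), i.e., Σ_{j=1}^k σ_j(C+D) ≤ Σ_{j=1}^k σ_j(C) + Σ_{j=1}^k σ_j(D) for all k. -/
open scoped BigOperators

/-- The singular values of a square complex matrix `Y` (eigenvalues of `|Y|`). -/
noncomputable def sv {m : ℕ} (Y : Matrix (Fin m) (Fin m) ℂ) : Fin m → ℝ :=
  fun j => Real.sqrt ((Matrix.isHermitian_conjTranspose_mul_self Y).eigenvalues j)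

/-!
For a Hermitian block `E = C + D` with unit eigenvector `x` for the eigenvalue `μ`, expanding
`μ = ⟪x, C x⟫ + ⟪x, D x⟫` in eigenbases of `C` and `D` gives
`|μ| ≤ ∑ₗ |λₗ(C)| ‖⟪uₗ, x⟫‖² + ∑ₗ |λₗ(D)| ‖⟪vₗ, x⟫‖²`. For a Hermitian matrix the singular values
are the absolute eigenvalues up to order, and the weights `‖⟪uₗ, xⱼ⟫‖²` form a doubly stochastic
matrix because both families are orthonormal bases. Summing over a set `T` of indices (in all
blocks at once) therefore bounds `∑_T σ(C + D)` by `∑ cₗ σₗ(C) + ∑ dₗ σₗ(D)` with weights in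
`[0, 1]` of total mass `#T`, and such a weighted sum is at most the sum of the `#T` largest values.
-/

open Finset Matrix
open scoped InnerProductSpace

section InnerProduct

variable {𝕜 E ι κ : Type*} [RCLike 𝕜] [NormedAddCommGroup E] [InnerProductSpace 𝕜 E]
  [Fintype ι] [Fintype κ]

theorem OrthonormalBasis.normSq_inner_mem_doublyStochastic [DecidableEq ι]
    (b c : OrthonormalBasis ι 𝕜 E) :
    Matrix.of (fun i j => ‖⟪b i, c j⟫_𝕜‖ ^ 2) ∈ doublyStochastic ℝ ι := by
  refine mem_doublyStochastic_iff_sum.2 ⟨fun _ _ => sq_nonneg _, fun i => ?_, fun j => ?_⟩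
  · simp [c.sum_sq_norm_inner_left, b.orthonormal.1 i]
  · simp [b.sum_sq_norm_inner_right, c.orthonormal.1 j]

theorem OrthonormalBasis.re_inner_map_self_eq_sum (b : OrthonormalBasis ι 𝕜 E) {T : E →ₗ[𝕜] E}
    {α : ι → ℝ} (hT : ∀ i, T (b i) = (α i : 𝕜) • b i) (x : E) :
    RCLike.re ⟪x, T x⟫_𝕜 = ∑ i, α i * ‖⟪b i, x⟫_𝕜‖ ^ 2 := by
  have hTx : T x = ∑ i, (α i : 𝕜) • ⟪b i, x⟫_𝕜 • b i := by
    conv_lhs => rw [← b.sum_repr' x]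
    simp only [map_sum, map_smul, hT]
    exact sum_congr rfl fun i _ => smul_comm _ _ _
  rw [hTx, inner_sum, map_sum]
  refine sum_congr rfl fun i _ => ?_
  rw [inner_smul_right, inner_smul_right, ← inner_conj_symm x (b i), RCLike.mul_conj]
  norm_cast

theorem OrthonormalBasis.abs_eigenvalue_add_le {S T : E →ₗ[𝕜] E} (a b : OrthonormalBasis ι 𝕜 E)
    (e : OrthonormalBasis κ 𝕜 E) {α β : ι → ℝ} {μ : κ → ℝ}
    (hS : ∀ i, S (a i) = (α i : 𝕜) • a i) (hT : ∀ i, T (b i) = (β i : 𝕜) • b i)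
    (hST : ∀ j, (S + T) (e j) = (μ j : 𝕜) • e j) (j : κ) :
    |μ j| ≤ ∑ i, |α i| * ‖⟪a i, e j⟫_𝕜‖ ^ 2 + ∑ i, |β i| * ‖⟪b i, e j⟫_𝕜‖ ^ 2 := by
  have hμ : μ j = RCLike.re ⟪e j, S (e j)⟫_𝕜 + RCLike.re ⟪e j, T (e j)⟫_𝕜 := by
    rw [← map_add, ← inner_add_right, ← LinearMap.add_apply, hST, inner_smul_right,
      inner_self_eq_norm_sq_to_K, e.orthonormal.1 j]
    simp
  rw [hμ, a.re_inner_map_self_eq_sum hS, b.re_inner_map_self_eq_sum hT]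
  refine (abs_add_le _ _).trans (add_le_add ?_ ?_) <;>
    exact (abs_sum_le_sum_abs _ _).trans_eq (by simp [abs_mul])

end InnerProduct

theorem Equiv.exists_perm_comp_eq_of_map_univ_eq {ι α : Type*} [Fintype ι] [DecidableEq α]
    {f g : ι → α} (h : univ.val.map f = univ.val.map g) :
    ∃ σ : Equiv.Perm ι, ∀ i, g (σ i) = f i := by
  classical
  have hcard (a : α) : Fintype.card {i // f i = a} = Fintype.card {i // g i = a} := by
    simpa [Fintype.card_subtype, Multiset.count_map, eq_comm, card_def, filter_val] using
      congrArg (Multiset.count a) h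
  exact ⟨Equiv.ofFiberEquiv fun a => Fintype.equivOfCardEq (hcard a), Equiv.ofFiberEquiv_map _⟩

open Polynomial in
theorem Matrix.IsHermitian.map_eigenvalues_conjTranspose_mul_self {n : Type*} [Fintype n]
    [DecidableEq n] {A : Matrix n n ℂ} (hA : A.IsHermitian) :
    univ.val.map (isHermitian_conjTranspose_mul_self A).eigenvalues =
      univ.val.map fun j => hA.eigenvalues j ^ 2 := by
  have hsq : Aᴴ * A = cfc (· ^ 2 : ℝ → ℝ) A := by
    rw [cfc_pow_id A 2 hA.isSelfAdjoint, sq, hA.eq]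
  apply Multiset.map_injective (RCLike.ofReal_injective (K := ℂ))
  rw [Multiset.map_map, Multiset.map_map,
    ← (isHermitian_conjTranspose_mul_self A).roots_charpoly_eq_eigenvalues, hsq,
    hA.charpoly_cfc_eq, roots_prod _ _ (prod_ne_zero_iff.2 fun i _ => X_sub_C_ne_zero _)]
  simp only [roots_X_sub_C, Multiset.bind_singleton]
  rfl

theorem Matrix.IsHermitian.exists_perm_abs_eigenvalues_eq_sv {m : ℕ}
    {A : Matrix (Fin m) (Fin m) ℂ} (hA : A.IsHermitian) :
    ∃ σ : Equiv.Perm (Fin m), ∀ j, |hA.eigenvalues (σ j)| = sv A j :=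
  Equiv.exists_perm_comp_eq_of_map_univ_eq (f := sv A) (g := fun j => |hA.eigenvalues j|) <| by
    rw [show sv A = Real.sqrt ∘ _ from rfl, ← Multiset.map_map,
      hA.map_eigenvalues_conjTranspose_mul_self, Multiset.map_map]
    simp only [Function.comp_def, Real.sqrt_sq_eq_abs]

theorem Matrix.IsHermitian.toEuclideanLin_eigenvectorBasis {𝕜 n : Type*} [RCLike 𝕜] [Fintype n]
    [DecidableEq n] {A : Matrix n n 𝕜} (hA : A.IsHermitian) (j : n) :
    toEuclideanLin A (hA.eigenvectorBasis j) = (hA.eigenvalues j : 𝕜) • hA.eigenvectorBasis j := by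
  rw [toLpLin_apply, hA.mulVec_eigenvectorBasis, RCLike.real_smul_eq_coe_smul (K := 𝕜)]
  rfl

theorem Matrix.IsHermitian.exists_doublyStochastic_sv_add_le {m : ℕ}
    {A B : Matrix (Fin m) (Fin m) ℂ} (hA : A.IsHermitian) (hB : B.IsHermitian) :
    ∃ W ∈ doublyStochastic ℝ (Fin m), ∃ V ∈ doublyStochastic ℝ (Fin m),
      ∀ j, sv (A + B) j ≤ (sv A ᵥ* W) j + (sv B ᵥ* V) j := by
  obtain ⟨σA, hσA⟩ := hA.exists_perm_abs_eigenvalues_eq_sv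
  obtain ⟨σB, hσB⟩ := hB.exists_perm_abs_eigenvalues_eq_sv
  obtain ⟨σ, hσ⟩ := (hA.add hB).exists_perm_abs_eigenvalues_eq_sv
  set a := hA.eigenvectorBasis.reindex σA.symm
  set b := hB.eigenvectorBasis.reindex σB.symm
  set e := (hA.add hB).eigenvectorBasis.reindex σ.symm
  refine ⟨_, a.normSq_inner_mem_doublyStochastic e, _, b.normSq_inner_mem_doublyStochastic e,
    fun j => ?_⟩
  have := OrthonormalBasis.abs_eigenvalue_add_le a b e (α := hA.eigenvalues ∘ σA)
    (β := hB.eigenvalues ∘ σB) (μ := (hA.add hB).eigenvalues ∘ σ)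
    (fun i => by simpa [a] using hA.toEuclideanLin_eigenvectorBasis (σA i))
    (fun i => by simpa [b] using hB.toEuclideanLin_eigenvectorBasis (σB i))
    (fun i => by simpa [e] using (hA.add hB).toEuclideanLin_eigenvectorBasis (σ i)) j
  simpa [vecMul, dotProduct, hσA, hσB, hσ] using this

theorem Finset.exists_card_eq_forall_mem_forall_notMem_le {ι α : Type*} [Fintype ι] [LinearOrder α]
    (a : ι → α) {k : ℕ} (hk : k ≤ Fintype.card ι) :
    ∃ S : Finset ι, #S = k ∧ ∀ i ∈ S, ∀ j ∉ S, a j ≤ a i := by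
  classical
  induction k with
  | zero => exact ⟨∅, rfl, by simp⟩
  | succ k ih =>
    obtain ⟨S, hS, htop⟩ := ih (by omega)
    have hne : Sᶜ.Nonempty := by rw [← card_pos, card_compl, hS]; omega
    obtain ⟨j₀, hj₀, hmax⟩ := Sᶜ.exists_max_image a hne
    rw [mem_compl] at hj₀
    refine ⟨insert j₀ S, by rw [card_insert_of_notMem hj₀, hS], fun i hi j hj => ?_⟩
    rw [mem_insert, not_or] at hj
    rcases mem_insert.1 hi with rfl | hi
    · exact hmax j (mem_compl.2 hj.2)
    · exact htop i hi j hj.2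

theorem Finset.exists_card_eq_sum_mul_le_sum {ι : Type*} [Fintype ι] (a c : ι → ℝ)
    (hc₀ : ∀ i, 0 ≤ c i) (hc₁ : ∀ i, c i ≤ 1) {k : ℕ} (hk : ∑ i, c i = k) :
    ∃ S : Finset ι, #S = k ∧ ∑ i, c i * a i ≤ ∑ i ∈ S, a i := by
  classical
  have hk_le : k ≤ Fintype.card ι := by
    have : (k : ℝ) ≤ Fintype.card ι := by
      simpa [← hk] using sum_le_sum fun i (_ : i ∈ univ) => hc₁ i
    exact_mod_cast this
  obtain ⟨S, hS, htop⟩ := exists_card_eq_forall_mem_forall_notMem_le a hk_le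
  obtain ⟨t, hSt, htS⟩ : ∃ t, (∀ i ∈ S, t ≤ a i) ∧ ∀ i ∉ S, a i ≤ t := by
    rcases S.eq_empty_or_nonempty with rfl | hne
    · obtain ⟨t, ht⟩ := (Set.finite_range a).bddAbove
      exact ⟨t, by simp, fun i _ => ht ⟨i, rfl⟩⟩
    · obtain ⟨i₀, hi₀, hmin⟩ := S.exists_min_image a hne
      exact ⟨a i₀, hmin, fun j hj => htop i₀ hi₀ j hj⟩
  refine ⟨S, hS, ?_⟩
  -- `c` and the indicator `d` of `S` both have mass `k`, so shifting `a` by the threshold `t`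
  -- changes nothing, and afterwards every term of the difference is `≤ 0`.
  set d : ι → ℝ := fun i => if i ∈ S then 1 else 0
  have hdiff : ∑ i, c i * a i - ∑ i ∈ S, a i = ∑ i, (c i - d i) * (a i - t) := by
    have hda : ∑ i ∈ S, a i = ∑ i, d i * a i := by simp [d, ite_mul]
    have hd : ∑ i, d i = k := by simp [d, hS]
    simp only [hda, sub_mul, mul_sub, sum_sub_distrib, ← sum_mul, hd, hk]
    ring
  have hnonpos : ∑ i, (c i - d i) * (a i - t) ≤ 0 := sum_nonpos fun i _ => by
    by_cases hi : i ∈ S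
    · simpa [d, hi] using
        mul_nonpos_of_nonpos_of_nonneg (by linarith [hc₁ i]) (sub_nonneg.2 (hSt i hi))
    · simpa [d, hi] using mul_nonpos_of_nonneg_of_nonpos (hc₀ i) (sub_nonpos.2 (htS i hi))
  linarith

theorem Matrix.exists_card_eq_sum_vecMul_le {ι : Type*} [Fintype ι] [DecidableEq ι]
    {W : Matrix ι ι ℝ} (hW : W ∈ doublyStochastic ℝ ι) (a : ι → ℝ) (T : Finset ι) :
    ∃ S : Finset ι, #S = #T ∧ ∑ j ∈ T, (a ᵥ* W) j ≤ ∑ i ∈ S, a i := by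
  have hsum : ∑ j ∈ T, (a ᵥ* W) j = ∑ i, (∑ j ∈ T, W i j) * a i := by
    simp only [vecMul, dotProduct, sum_mul]
    rw [sum_comm]
    simp only [mul_comm]
  rw [hsum]
  refine exists_card_eq_sum_mul_le_sum a _
    (fun i => sum_nonneg fun j _ => nonneg_of_mem_doublyStochastic hW) (fun i => ?_) ?_
  · calc ∑ j ∈ T, W i j ≤ ∑ j, W i j :=
          sum_le_sum_of_subset_of_nonneg (subset_univ T) fun j _ _ =>
            nonneg_of_mem_doublyStochastic hW
      _ = 1 := sum_row_of_mem_doublyStochastic hW i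
  · calc ∑ i, ∑ j ∈ T, W i j = ∑ j ∈ T, ∑ i, W i j := sum_comm
      _ = #T := by simp [sum_col_of_mem_doublyStochastic hW]

theorem Matrix.blockDiagonal_mem_doublyStochastic {R ι κ : Type*} [Semiring R] [PartialOrder R]
    [IsOrderedRing R] [Fintype ι] [DecidableEq ι] [Fintype κ] [DecidableEq κ]
    {W : κ → Matrix ι ι R} (hW : ∀ k, W k ∈ doublyStochastic R ι) :
    blockDiagonal W ∈ doublyStochastic R (ι × κ) := by
  refine mem_doublyStochastic_iff_sum.2 ⟨fun p q => ?_, fun p => ?_, fun q => ?_⟩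
  · rw [blockDiagonal_apply]
    split_ifs
    exacts [nonneg_of_mem_doublyStochastic (hW _), le_rfl]
  · simp [blockDiagonal_apply, Fintype.sum_prod_type, sum_row_of_mem_doublyStochastic (hW _)]
  · simp [blockDiagonal_apply, Fintype.sum_prod_type, sum_col_of_mem_doublyStochastic (hW _)]

theorem Matrix.exists_card_eq_sum_blockwise_vecMul_le {ι κ : Type*} [Fintype ι] [DecidableEq ι]
    [Fintype κ] [DecidableEq κ] {W : κ → Matrix ι ι ℝ} (hW : ∀ k, W k ∈ doublyStochastic ℝ ι)
    (a : κ × ι → ℝ) (T : Finset (κ × ι)) :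
    ∃ S : Finset (κ × ι), #S = #T ∧
      ∑ q ∈ T, ((fun l => a (q.1, l)) ᵥ* W q.1) q.2 ≤ ∑ q ∈ S, a q := by
  have hM := reindex_mem_doublyStochastic (e₁ := Equiv.prodComm ι κ) (e₂ := Equiv.prodComm ι κ)
    (blockDiagonal_mem_doublyStochastic hW)
  have hvecMul (q : κ × ι) : (a ᵥ* (blockDiagonal W).reindex (.prodComm ι κ) (.prodComm ι κ)) q =
      ((fun l => a (q.1, l)) ᵥ* W q.1) q.2 := by
    simp [vecMul, dotProduct, blockDiagonal_apply, Fintype.sum_prod_type]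
  simpa only [hvecMul] using exists_card_eq_sum_vecMul_le hM a T

theorem sum_le_sSup_sum_of_card_eq {ι : Type*} [Fintype ι] (s : ι → ℝ) {S : Finset ι} {k : ℕ}
    (hS : #S = k) : ∑ i ∈ S, s i ≤ sSup {r : ℝ | ∃ T : Finset ι, #T = k ∧ r = ∑ i ∈ T, s i} :=
  le_csSup ((Set.finite_range fun T : Finset ι => ∑ i ∈ T, s i).subset
    (by rintro _ ⟨T, -, rfl⟩; exact ⟨T, rfl⟩)).bddAbove ⟨S, hS, rfl⟩

/-- Represent symmetric T-product tensors `C, D ∈ R^{m×m×p}` by their Hermitian DFT blocks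
`C i, D i`; the T-singular values are the singular values of all the blocks taken together
(indexed by `Fin p × Fin m`), and the supremum over `k`-element index sets is the sum of the `k`
largest of them. -/
theorem tsingular_weak_majorization_sum {m p : ℕ}
    (C D : Fin p → Matrix (Fin m) (Fin m) ℂ)
    (hC : ∀ i, (C i).IsHermitian) (hD : ∀ i, (D i).IsHermitian) :
    ∀ T : Finset (Fin p × Fin m),
      ∑ q ∈ T, sv (C q.1 + D q.1) q.2 ≤
        sSup {r : ℝ | ∃ T' : Finset (Fin p × Fin m),
          T'.card = T.card ∧ r = ∑ q ∈ T', sv (C q.1) q.2} +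
        sSup {r : ℝ | ∃ T' : Finset (Fin p × Fin m),
          T'.card = T.card ∧ r = ∑ q ∈ T', sv (D q.1) q.2} := by
  intro T
  choose W hW V hV hle using fun i => (hC i).exists_doublyStochastic_sv_add_le (hD i)
  obtain ⟨S, hS, hCS⟩ := exists_card_eq_sum_blockwise_vecMul_le hW (fun q => sv (C q.1) q.2) T
  obtain ⟨S', hS', hDS'⟩ := exists_card_eq_sum_blockwise_vecMul_le hV (fun q => sv (D q.1) q.2) T
  calc ∑ q ∈ T, sv (C q.1 + D q.1) q.2
      ≤ ∑ q ∈ T, ((sv (C q.1) ᵥ* W q.1) q.2 + (sv (D q.1) ᵥ* V q.1) q.2) :=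
        sum_le_sum fun q _ => hle q.1 q.2
    _ ≤ ∑ q ∈ S, sv (C q.1) q.2 + ∑ q ∈ S', sv (D q.1) q.2 := by
        rw [sum_add_distrib]
        exact add_le_add hCS hDS'
    _ ≤ _ := add_le_add (sum_le_sSup_sum_of_card_eq _ hS) (sum_le_sSup_sum_of_card_eq _ hS')
end

section
/- Ky Fan k-norm Hölder-type inequality for products: Let C_1,...,C_m be symmetric T-product tensors in R^{m×m×p}, s ≥ 1, and p_1,...,p_m > 0 with Σ 1/p_i = 1. Then for every k, ‖|Π_{i=1}^m C_i|^s‖_{(k)} ≤ Π_{i=1}^m (‖|C_i|^{s p_i}‖_{(k)})^{1/p_i} ≤ Σ_{i=1}^m ‖|C_i|^{s p_i}‖_{(k)} / p_i. -/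
open scoped BigOperators

/-- The T-singular values of a T-product tensor represented by its DFT blocks,
indexed over all blocks simultaneously. -/
noncomputable def svB {m p : ℕ} (X : Fin p → Matrix (Fin m) (Fin m) ℂ)
    (q : Fin p × Fin m) : ℝ := sv (X q.1) q.2

/-- `‖|H|^e‖_{(k)}`: the sum of the `k` largest values among the `e`-th powers of
the T-singular values of `H` (as the supremum over `k`-element index sets). -/
noncomputable def kyFanPow {m p : ℕ} (X : Fin p → Matrix (Fin m) (Fin m) ℂ)
    (e : ℝ) (k : ℕ) : ℝ :=
  sSup {r : ℝ | ∃ T : Finset (Fin p × Fin m),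
    T.card = k ∧ r = ∑ q ∈ T, svB X q ^ e}

/-!
Horn's inequality, blockwise: for `P = A₁ ⋯ A_M`, a product of `l` singular values of `P` is at
most `∏ᵢ` (product of the `l` largest singular values of `Aᵢ`). Compressing `Pᴴ P` to `l` of its
eigenvectors makes the left side a determinant `det (Wᴴ Pᴴ P W)`, and Cauchy–Binet gives
`det (Xᴴ Aᴴ A X) ≤ (product of the l largest eigenvalues of Aᴴ A) · det (Xᴴ X)`, peeling off one
factor at a time. This weak log-majorization of the T-singular values of the product by the
products of the sorted T-singular values of the factors implies weak majorization of their
`s`-th powers (Abel summation and `log t ≤ t - 1`). Hölder's inequality for the sorted values,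
then the weighted AM-GM (Young) inequality, give the two bounds.
-/

open Finset

section MaxOverCard

variable {ι κ : Type*}

/-- Junk value `0` when `k > card ι`, as then the set is empty. -/
noncomputable def maxOverCard (F : Finset ι → ℝ) (k : ℕ) : ℝ :=
  sSup {r : ℝ | ∃ T : Finset ι, T.card = k ∧ r = F T}

noncomputable def topSum (v : ι → ℝ) (k : ℕ) : ℝ := maxOverCard (fun T => ∑ q ∈ T, v q) k

noncomputable def topProd (v : ι → ℝ) (k : ℕ) : ℝ := maxOverCard (fun T => ∏ q ∈ T, v q) k

variable {F : Finset ι → ℝ} {k : ℕ}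

theorem finite_setOf_card_eq [Finite ι] (F : Finset ι → ℝ) (k : ℕ) :
    {r : ℝ | ∃ T : Finset ι, T.card = k ∧ r = F T}.Finite :=
  (Set.finite_range F).subset (by rintro _ ⟨T, -, rfl⟩; exact ⟨T, rfl⟩)

theorem le_maxOverCard [Finite ι] {T : Finset ι} (hT : T.card = k) : F T ≤ maxOverCard F k :=
  le_csSup (finite_setOf_card_eq F k).bddAbove ⟨T, hT, rfl⟩

theorem maxOverCard_le {a : ℝ} (h : ∀ T : Finset ι, T.card = k → F T ≤ a) (ha : 0 ≤ a) :
    maxOverCard F k ≤ a :=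
  Real.sSup_le (by rintro _ ⟨T, hT, rfl⟩; exact h T hT) ha

theorem maxOverCard_nonneg (h : ∀ T, 0 ≤ F T) : 0 ≤ maxOverCard F k :=
  Real.sSup_nonneg (by rintro _ ⟨T, -, rfl⟩; exact h T)

theorem maxOverCard_of_card_lt [Fintype ι] (hk : Fintype.card ι < k) : maxOverCard F k = 0 := by
  rw [maxOverCard]
  convert Real.sSup_empty
  refine Set.eq_empty_of_forall_notMem ?_
  rintro _ ⟨T, hT, -⟩
  exact hk.not_ge (hT ▸ T.card_le_univ)

theorem exists_maxOverCard_eq [Fintype ι] (F : Finset ι → ℝ) (hk : k ≤ Fintype.card ι) :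
    ∃ T : Finset ι, T.card = k ∧ maxOverCard F k = F T := by
  obtain ⟨T, -, hT⟩ := exists_subset_card_eq (s := univ) (by simpa using hk)
  have hne : {r : ℝ | ∃ T : Finset ι, T.card = k ∧ r = F T}.Nonempty := ⟨F T, T, hT, rfl⟩
  obtain ⟨T, hT, h⟩ := hne.csSup_mem (finite_setOf_card_eq F k)
  exact ⟨T, hT, h⟩

theorem maxOverCard_eq_of_forall_le [Finite ι] {T₀ : Finset ι} (hT₀ : T₀.card = k)
    (h : ∀ T : Finset ι, T.card = k → F T ≤ F T₀) : maxOverCard F k = F T₀ :=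
  IsGreatest.csSup_eq ⟨⟨T₀, hT₀, rfl⟩, by rintro _ ⟨T, hT, rfl⟩; exact h T hT⟩

theorem maxOverCard_map_equiv (e : κ ≃ ι) (F : Finset ι → ℝ) (k : ℕ) :
    maxOverCard (fun T => F (T.map e.toEmbedding)) k = maxOverCard F k := by
  refine congrArg sSup (Set.ext fun r => ⟨?_, ?_⟩)
  · rintro ⟨T, hT, rfl⟩
    exact ⟨T.map e.toEmbedding, by rwa [card_map], rfl⟩
  · rintro ⟨T, hT, rfl⟩
    refine ⟨T.map e.symm.toEmbedding, by rwa [card_map], ?_⟩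
    simp [map_map]

theorem le_topSum [Finite ι] (v : ι → ℝ) {T : Finset ι} (hT : T.card = k) :
    ∑ q ∈ T, v q ≤ topSum v k :=
  le_maxOverCard (F := fun T => ∑ q ∈ T, v q) hT

theorem le_topProd [Finite ι] (v : ι → ℝ) {T : Finset ι} (hT : T.card = k) :
    ∏ q ∈ T, v q ≤ topProd v k :=
  le_maxOverCard (F := fun T => ∏ q ∈ T, v q) hT

theorem topSum_nonneg {v : ι → ℝ} (hv : ∀ q, 0 ≤ v q) (k : ℕ) : 0 ≤ topSum v k :=
  maxOverCard_nonneg fun _ => sum_nonneg fun q _ => hv q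

theorem topProd_nonneg {v : ι → ℝ} (hv : ∀ q, 0 ≤ v q) (k : ℕ) : 0 ≤ topProd v k :=
  maxOverCard_nonneg fun _ => prod_nonneg fun q _ => hv q

theorem topSum_comp_equiv (v : ι → ℝ) (e : κ ≃ ι) (k : ℕ) : topSum (v ∘ e) k = topSum v k := by
  simpa [topSum] using maxOverCard_map_equiv e (fun T => ∑ q ∈ T, v q) k

theorem topProd_comp_equiv (v : ι → ℝ) (e : κ ≃ ι) (k : ℕ) :
    topProd (v ∘ e) k = topProd v k := by
  simpa [topProd] using maxOverCard_map_equiv e (fun T => ∏ q ∈ T, v q) k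

theorem topProd_rpow [Fintype ι] {v : ι → ℝ} (hv : ∀ q, 0 ≤ v q) {s : ℝ} (hs : 0 < s) (k : ℕ) :
    topProd (fun q => v q ^ s) k = topProd v k ^ s := by
  rcases lt_or_ge (Fintype.card ι) k with hk | hk
  · rw [topProd, topProd, maxOverCard_of_card_lt hk, maxOverCard_of_card_lt hk,
      Real.zero_rpow hs.ne']
  obtain ⟨T₀, hT₀, hmax⟩ := exists_maxOverCard_eq (fun T => ∏ q ∈ T, v q) hk
  have hpow (T : Finset ι) : ∏ q ∈ T, v q ^ s = (∏ q ∈ T, v q) ^ s :=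
    Real.finsetProd_rpow T v (fun q _ => hv q) s
  rw [topProd, topProd, hmax, ← hpow]
  refine maxOverCard_eq_of_forall_le hT₀ fun T hT => ?_
  rw [hpow, hpow]
  exact Real.rpow_le_rpow (prod_nonneg fun q _ => hv q) (hmax ▸ le_topProd v hT) hs.le

end MaxOverCard

section Sorting

theorem Fin.val_le_val_of_strictMono {l n : ℕ} {f : Fin l → Fin n} (hf : StrictMono f)
    (i : Fin l) : (i : ℕ) ≤ f i := by
  obtain ⟨i, hi⟩ := i
  induction i with
  | zero => exact Nat.zero_le _
  | succ i ih =>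
    have hlt : f ⟨i, by omega⟩ < f ⟨i + 1, hi⟩ := hf (Fin.mk_lt_mk.mpr i.lt_succ_self)
    exact (ih (by omega)).trans_lt hlt

theorem exists_perm_antitone_comp {α : Type*} [LinearOrder α] {n : ℕ} (v : Fin n → α) :
    ∃ σ : Equiv.Perm (Fin n), Antitone (v ∘ σ) :=
  ⟨Fin.revPerm.trans (Tuple.sort v), fun _ _ hab => Tuple.monotone_sort v (Fin.rev_le_rev.mpr hab)⟩

theorem exists_equiv_antitone_comp {α ι : Type*} [LinearOrder α] [Fintype ι] (v : ι → α) :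
    ∃ e : Fin (Fintype.card ι) ≃ ι, Antitone (v ∘ e) := by
  obtain ⟨σ, hσ⟩ := exists_perm_antitone_comp (v ∘ (Fintype.equivFin ι).symm)
  exact ⟨σ.trans (Fintype.equivFin ι).symm, hσ⟩

variable {n k : ℕ} {u : Fin n → ℝ}

theorem sum_le_sum_castLE_of_antitone (hu : Antitone u) (hk : k ≤ n) {B : Finset (Fin n)}
    (hB : B.card = k) : ∑ i ∈ B, u i ≤ ∑ i : Fin k, u (Fin.castLE hk i) := by
  rw [← map_orderEmbOfFin_univ B hB, sum_map]
  exact sum_le_sum fun i _ => hu (Fin.val_le_val_of_strictMono (B.orderEmbOfFin hB).strictMono i)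

theorem prod_le_prod_castLE_of_antitone (hu : Antitone u) (h0 : ∀ i, 0 ≤ u i) (hk : k ≤ n)
    {B : Finset (Fin n)} (hB : B.card = k) : ∏ i ∈ B, u i ≤ ∏ i : Fin k, u (Fin.castLE hk i) := by
  rw [← map_orderEmbOfFin_univ B hB, prod_map]
  exact prod_le_prod (fun i _ => h0 _)
    fun i _ => hu (Fin.val_le_val_of_strictMono (B.orderEmbOfFin hB).strictMono i)

theorem topSum_eq_of_antitone (hu : Antitone u) (hk : k ≤ n) :
    topSum u k = ∑ i : Fin k, u (Fin.castLE hk i) := by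
  rw [show ∑ i : Fin k, u (Fin.castLE hk i) = ∑ i ∈ univ.map (Fin.castLEEmb hk), u i by simp]
  exact maxOverCard_eq_of_forall_le (by simp) fun B hB => by
    simpa using sum_le_sum_castLE_of_antitone hu hk hB

theorem topProd_eq_of_antitone (hu : Antitone u) (h0 : ∀ i, 0 ≤ u i) (hk : k ≤ n) :
    topProd u k = ∏ i : Fin k, u (Fin.castLE hk i) := by
  rw [show ∏ i : Fin k, u (Fin.castLE hk i) = ∏ i ∈ univ.map (Fin.castLEEmb hk), u i by simp]
  exact maxOverCard_eq_of_forall_le (by simp) fun B hB => by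
    simpa using prod_le_prod_castLE_of_antitone hu h0 hk hB

@[to_additive]
theorem Fin.prod_castLE_eq_prod_range_extend {M : Type*} [CommMonoid M] (u : Fin n → M)
    (d : ℕ → M) (hk : k ≤ n) :
    ∏ i : Fin k, u (Fin.castLE hk i) = ∏ j ∈ range k, Function.extend Fin.val u d j := by
  rw [← Fin.prod_univ_eq_prod_range]
  exact prod_congr rfl fun i _ => (Fin.val_injective.extend_apply u d (Fin.castLE hk i)).symm

end Sorting

section Majorization

variable {U V d : ℕ → ℝ} {k : ℕ}

theorem sum_mul_nonpos_of_antitoneOn (hU0 : ∀ j < k, 0 ≤ U j) (hU : AntitoneOn U (Set.Iio k))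
    (hd : ∀ l ≤ k, ∑ j ∈ range l, d j ≤ 0) : ∑ j ∈ range k, U j * d j ≤ 0 := by
  rcases k with _ | k
  · simp
  have := sum_range_by_parts U d (k + 1)
  simp only [smul_eq_mul, add_tsub_cancel_right] at this
  rw [this, sub_nonpos]
  calc U k * ∑ j ∈ range (k + 1), d j ≤ 0 :=
        mul_nonpos_of_nonneg_of_nonpos (hU0 k k.lt_succ_self) (hd _ le_rfl)
    _ ≤ _ := sum_nonneg fun j hj => by
      have hj : j < k := mem_range.mp hj
      refine mul_nonneg_of_nonpos_of_nonpos ?_ (hd _ (by omega))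
      exact sub_nonpos.mpr (hU (Set.mem_Iio.mpr (by omega)) (Set.mem_Iio.mpr (by omega)) j.le_succ)

theorem sum_range_le_sum_range_of_prod_le_of_pos (hU : ∀ j < k, 0 < U j) (hV : ∀ j < k, 0 < V j)
    (hUa : AntitoneOn U (Set.Iio k))
    (h : ∀ l ≤ k, ∏ j ∈ range l, U j ≤ ∏ j ∈ range l, V j) :
    ∑ j ∈ range k, U j ≤ ∑ j ∈ range k, V j := by
  have hlog : ∀ l ≤ k, ∑ j ∈ range l, (Real.log (U j) - Real.log (V j)) ≤ 0 := fun l hl => by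
    have hpos (W : ℕ → ℝ) (hW : ∀ j < k, 0 < W j) : ∀ j ∈ range l, 0 < W j :=
      fun j hj => hW j ((mem_range.mp hj).trans_le hl)
    rw [sum_sub_distrib, ← Real.log_prod fun j hj => (hpos U hU j hj).ne',
      ← Real.log_prod fun j hj => (hpos V hV j hj).ne', sub_nonpos]
    exact Real.log_le_log (prod_pos (hpos U hU)) (h l hl)
  have hpt : ∀ j ∈ range k, U j - V j ≤ U j * (Real.log (U j) - Real.log (V j)) := by
    intro j hj
    have hUj := hU j (mem_range.mp hj)
    have hVj := hV j (mem_range.mp hj)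
    have := mul_le_mul_of_nonneg_left (Real.log_le_sub_one_of_pos (div_pos hVj hUj)) hUj.le
    rw [Real.log_div hVj.ne' hUj.ne', mul_sub (U j) (V j / U j), mul_div_cancel₀ _ hUj.ne',
      mul_one] at this
    linarith
  have := (sum_le_sum hpt).trans
    (sum_mul_nonpos_of_antitoneOn (fun j hj => (hU j hj).le) hUa hlog)
  rwa [sum_sub_distrib, sub_nonpos] at this

theorem sum_range_le_sum_range_of_prod_le (hU : ∀ j < k, 0 ≤ U j) (hV : ∀ j < k, 0 ≤ V j)
    (hUa : AntitoneOn U (Set.Iio k))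
    (h : ∀ l ≤ k, ∏ j ∈ range l, U j ≤ ∏ j ∈ range l, V j) :
    ∑ j ∈ range k, U j ≤ ∑ j ∈ range k, V j := by
  classical
  -- cut at the first zero `r` of `U`: before it `V` cannot vanish either, as its prefix
  -- products dominate those of `U`
  have hr : ∃ r, r = k ∨ (r < k ∧ U r = 0) := ⟨k, Or.inl rfl⟩
  let r := Nat.find hr
  have hrk : r ≤ k := by rcases Nat.find_spec hr with h | h <;> omega
  have hUpos : ∀ j < r, 0 < U j := fun j hj =>
    (hU j (by omega)).lt_of_ne' fun h0 => Nat.find_min hr hj (Or.inr ⟨by omega, h0⟩)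
  have hUzero : ∀ j ∈ range k, j ∉ range r → U j = 0 := by
    intro j hj hjr
    simp only [mem_range, not_lt] at hj hjr
    rcases Nat.find_spec hr with h | ⟨hrk', hUr⟩
    · omega
    · exact le_antisymm (hUr ▸ hUa hrk' (by simpa using hj) hjr) (hU j hj)
  have hVpos : ∀ j < r, 0 < V j := by
    intro j hj
    refine (hV j (by omega)).lt_of_ne' fun h0 => ?_
    have := h (j + 1) (by omega)
    rw [prod_eq_zero (mem_range.mpr j.lt_succ_self) h0] at this
    exact this.not_gt (prod_pos fun i hi => hUpos i ((mem_range.mp hi).trans_le hj))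
  calc ∑ j ∈ range k, U j = ∑ j ∈ range r, U j :=
        (sum_subset (range_subset_range.mpr hrk) hUzero).symm
    _ ≤ ∑ j ∈ range r, V j :=
        sum_range_le_sum_range_of_prod_le_of_pos hUpos hVpos (hUa.mono (Set.Iio_subset_Iio hrk))
          fun l hl => h l (hl.trans hrk)
    _ ≤ ∑ j ∈ range k, V j :=
        sum_le_sum_of_subset_of_nonneg (range_subset_range.mpr hrk)
          fun j hj _ => hV j (mem_range.mp hj)

end Majorization

section KyFan

variable {ι κ : Type*} [Fintype ι]

theorem topSum_le_topSum_of_topProd_le {x y : ι → ℝ} (hx : ∀ q, 0 ≤ x q) (hy : ∀ q, 0 ≤ y q)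
    (h : ∀ l, topProd x l ≤ topProd y l) (k : ℕ) : topSum x k ≤ topSum y k := by
  rcases lt_or_ge (Fintype.card ι) k with hk | hk
  · rw [topSum, maxOverCard_of_card_lt hk]
    exact topSum_nonneg hy k
  have hsum {v : ι → ℝ} {e : Fin (Fintype.card ι) ≃ ι} (he : Antitone (v ∘ e)) :
      topSum v k = ∑ j ∈ range k, Function.extend Fin.val (v ∘ e) 0 j := by
    rw [← topSum_comp_equiv v e, topSum_eq_of_antitone he hk, Fin.sum_castLE_eq_sum_range_extend]
  have hprod {v : ι → ℝ} (hv : ∀ q, 0 ≤ v q) {e : Fin (Fintype.card ι) ≃ ι}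
      (he : Antitone (v ∘ e)) {l : ℕ} (hl : l ≤ k) :
      topProd v l = ∏ j ∈ range l, Function.extend Fin.val (v ∘ e) 0 j := by
    rw [← topProd_comp_equiv v e, topProd_eq_of_antitone he (fun i => hv _) (hl.trans hk),
      Fin.prod_castLE_eq_prod_range_extend]
  have hextend {v : ι → ℝ} (e : Fin (Fintype.card ι) ≃ ι) {j : ℕ} (hj : j < k) :
      Function.extend Fin.val (v ∘ e) 0 j = v (e ⟨j, hj.trans_le hk⟩) :=
    Fin.val_injective.extend_apply _ _ (⟨j, hj.trans_le hk⟩ : Fin _)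
  obtain ⟨ex, hex⟩ := exists_equiv_antitone_comp x
  obtain ⟨ey, hey⟩ := exists_equiv_antitone_comp y
  rw [hsum hex, hsum hey]
  refine sum_range_le_sum_range_of_prod_le (fun j hj => ?_) (fun j hj => ?_)
    (fun a ha b hb hab => ?_) fun l hl => ?_
  · exact (hextend ex hj).symm ▸ hx _
  · exact (hextend ey hj).symm ▸ hy _
  · rw [hextend ex ha, hextend ex hb]
    exact hex (Fin.mk_le_mk.mpr hab)
  · rw [← hprod hx hex hl, ← hprod hy hey hl]
    exact h l

theorem topSum_rpow_le_topSum_rpow_of_topProd_le {x y : ι → ℝ} (hx : ∀ q, 0 ≤ x q)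
    (hy : ∀ q, 0 ≤ y q) (h : ∀ l, topProd x l ≤ topProd y l) {s : ℝ} (hs : 0 < s) (k : ℕ) :
    topSum (fun q => x q ^ s) k ≤ topSum (fun q => y q ^ s) k := by
  refine topSum_le_topSum_of_topProd_le (fun q => Real.rpow_nonneg (hx q) s)
    (fun q => Real.rpow_nonneg (hy q) s) (fun l => ?_) k
  rw [topProd_rpow hx hs, topProd_rpow hy hs]
  exact Real.rpow_le_rpow (topProd_nonneg hx l) (h l) hs.le

theorem sum_prod_rpow_le_prod_sum_rpow (T : Finset κ) {b : ι → ℝ} (hb : ∀ i, 0 < b i)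
    (hb1 : ∑ i, b i = 1) {f : ι → κ → ℝ} (hf : ∀ i q, 0 ≤ f i q) :
    ∑ q ∈ T, ∏ i, f i q ^ b i ≤ ∏ i, (∑ q ∈ T, f i q) ^ b i := by
  obtain ⟨S, hSdef⟩ : ∃ S : ι → ℝ, ∀ i, ∑ q ∈ T, f i q = S i := ⟨_, fun _ => rfl⟩
  simp only [hSdef]
  by_cases hS : ∃ i, S i = 0
  · obtain ⟨i₀, hi₀⟩ := hS
    have hf0 : ∀ q ∈ T, f i₀ q = 0 :=
      (sum_eq_zero_iff_of_nonneg fun q _ => hf i₀ q).mp ((hSdef i₀).trans hi₀)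
    rw [sum_eq_zero fun q hq => prod_eq_zero (mem_univ i₀) (by
      rw [hf0 q hq, Real.zero_rpow (hb i₀).ne']), prod_eq_zero (mem_univ i₀) (by
      rw [hi₀, Real.zero_rpow (hb i₀).ne'])]
  push Not at hS
  have hSpos : ∀ i, 0 < S i := fun i => (hSdef i ▸ sum_nonneg fun q _ => hf i q).lt_of_ne' (hS i)
  -- weighted AM-GM on the normalized entries `f i q / S i`, then sum over `q`
  have hamgm : ∀ q ∈ T, ∏ i, f i q ^ b i ≤ (∏ i, S i ^ b i) * ∑ i, b i * (f i q / S i) := by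
    intro q _
    have hsplit : ∏ i, f i q ^ b i = (∏ i, S i ^ b i) * ∏ i, (f i q / S i) ^ b i := by
      rw [← prod_mul_distrib]
      refine prod_congr rfl fun i _ => ?_
      rw [← Real.mul_rpow (hSpos i).le (div_nonneg (hf i q) (hSpos i).le),
        mul_div_cancel₀ _ (hSpos i).ne']
    rw [hsplit]
    exact mul_le_mul_of_nonneg_left (Real.geom_mean_le_arith_mean_weighted univ b _
      (fun i _ => (hb i).le) hb1 fun i _ => div_nonneg (hf i q) (hSpos i).le)
      (prod_nonneg fun i _ => Real.rpow_nonneg (hSpos i).le _)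
  have hnorm : ∑ q ∈ T, ∑ i, b i * (f i q / S i) = 1 := by
    rw [sum_comm, ← hb1]
    refine sum_congr rfl fun i _ => ?_
    rw [← mul_sum, ← sum_div, hSdef, div_self (hS i), mul_one]
  calc ∑ q ∈ T, ∏ i, f i q ^ b i ≤ ∑ q ∈ T, (∏ i, S i ^ b i) * ∑ i, b i * (f i q / S i) :=
        sum_le_sum hamgm
    _ = ∏ i, S i ^ b i := by rw [← mul_sum, hnorm, mul_one]

theorem topSum_prod_rpow_le [Fintype κ] {f : ι → κ → ℝ} (hf : ∀ i q, 0 ≤ f i q) {b : ι → ℝ}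
    (hb : ∀ i, 0 < b i) (hb1 : ∑ i, b i = 1) (k : ℕ) :
    topSum (fun q => ∏ i, f i q ^ b i) k ≤ ∏ i, topSum (f i) k ^ b i := by
  refine maxOverCard_le (fun T hT => ?_)
    (prod_nonneg fun i _ => Real.rpow_nonneg (topSum_nonneg (hf i) k) _)
  refine (sum_prod_rpow_le_prod_sum_rpow T hb hb1 hf).trans (prod_le_prod
    (fun i _ => Real.rpow_nonneg (sum_nonneg fun q _ => hf i q) _) fun i _ => ?_)
  exact Real.rpow_le_rpow (sum_nonneg fun q _ => hf i q) (le_topSum (f i) hT) (hb i).le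

end KyFan

section Compression

open Matrix Set.powersetCard

theorem Matrix.det_mul_eq_sum_powersetCard {R : Type*} [CommRing R] {l m : ℕ}
    (A : Matrix (Fin l) (Fin m) R) (B : Matrix (Fin m) (Fin l) R) :
    (A * B).det = ∑ s : Set.powersetCard (Fin m) l,
      (A.submatrix id (ofFinEmbEquiv.symm s)).det *
        (B.submatrix (ofFinEmbEquiv.symm s) id).det := by
  -- expand the wedge of the columns of `B` in the standard basis of `⋀^l`, then apply the
  -- linear form induced by `v ↦ det (A v₁, …, A v_l)`
  let F : ⋀[R]^l (Fin m → R) →ₗ[R] R :=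
    exteriorPower.alternatingMapLinearEquiv (detRowAlternating.compLinearMap A.mulVecLin)
  have hF (v : Fin l → Fin m → R) : F (exteriorPower.ιMulti R l v) = (of fun i => A *ᵥ v i).det :=
    exteriorPower.alternatingMapLinearEquiv_apply_ιMulti _ _
  have h := congrArg F (((Pi.basisFun R (Fin m)).exteriorPower l).sum_repr
    (exteriorPower.ιMulti R l fun j r => B r j))
  rw [map_sum, hF] at h
  simp only [map_smul, hF, exteriorPower.basis_repr_apply, exteriorPower.basis_apply,
    exteriorPower.ιMulti_family, smul_eq_mul, exteriorPower.ιMultiDual_apply_ιMulti] at h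
  rw [← det_transpose, show (A * B)ᵀ = of fun i => A *ᵥ fun r => B r i by
    ext i k; simp [mulVec, dotProduct, mul_apply], ← h]
  refine sum_congr rfl fun s _ => ?_
  rw [mul_comm, ← det_transpose (A.submatrix _ _), ← det_transpose (B.submatrix _ _)]
  congr 2
  ext i j
  simp

variable {m l : ℕ}

theorem Matrix.det_conjTranspose_mul_diagonal_mul (Y : Matrix (Fin m) (Fin l) ℂ)
    (d : Fin m → ℝ) :
    (Yᴴ * diagonal (fun r => (d r : ℂ)) * Y).det = ∑ s : Set.powersetCard (Fin m) l,
      (((∏ r ∈ (s : Finset (Fin m)), d r) *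
        Complex.normSq (Y.submatrix (ofFinEmbEquiv.symm s) id).det : ℝ) : ℂ) := by
  rw [Matrix.mul_assoc, det_mul_eq_sum_powersetCard]
  refine sum_congr rfl fun s _ => ?_
  set σ := ofFinEmbEquiv.symm s
  have hσ : ∏ r ∈ (s : Finset (Fin m)), d r = ∏ i, d (σ i) := by
    rw [← map_orderEmbOfFin_univ s.1 s.2, prod_map]
    rfl
  have hB : (diagonal (fun r => (d r : ℂ)) * Y).submatrix σ id =
      diagonal (fun i => (d (σ i) : ℂ)) * Y.submatrix σ id := by
    ext i j
    simp [diagonal_mul]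
  rw [hB, det_mul, det_diagonal, ← conjTranspose_submatrix, det_conjTranspose, hσ]
  push_cast
  rw [Complex.normSq_eq_conj_mul_self, Complex.star_def]
  ring

theorem Matrix.re_det_conjTranspose_mul_diagonal_mul_le (Y : Matrix (Fin m) (Fin l) ℂ)
    (d : Fin m → ℝ) :
    (Yᴴ * diagonal (fun r => (d r : ℂ)) * Y).det.re ≤ topProd d l * (Yᴴ * Y).det.re := by
  have hY : Yᴴ * Y = Yᴴ * diagonal (fun r => ((1 : Fin m → ℝ) r : ℂ)) * Y := by simp
  rw [hY, det_conjTranspose_mul_diagonal_mul, det_conjTranspose_mul_diagonal_mul, Complex.re_sum,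
    Complex.re_sum, mul_sum]
  refine sum_le_sum fun s _ => ?_
  simp only [Complex.ofReal_re, Pi.one_apply, prod_const_one, one_mul]
  exact mul_le_mul_of_nonneg_right (le_topProd d s.2) (Complex.normSq_nonneg _)

theorem Matrix.IsHermitian.re_det_conjTranspose_mul_mul_le {H : Matrix (Fin m) (Fin m) ℂ}
    (hH : H.IsHermitian) (X : Matrix (Fin m) (Fin l) ℂ) :
    (Xᴴ * H * X).det.re ≤ topProd hH.eigenvalues l * (Xᴴ * X).det.re := by
  set U : Matrix (Fin m) (Fin m) ℂ := ↑hH.eigenvectorUnitary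
  set D := diagonal fun r => (hH.eigenvalues r : ℂ)
  have hUU : U * Uᴴ = 1 := Unitary.mul_star_self_of_mem hH.eigenvectorUnitary.2
  have hH' : H = U * D * Uᴴ := hH.spectral_theorem
  have key := re_det_conjTranspose_mul_diagonal_mul_le (Uᴴ * X) hH.eigenvalues
  simp only [conjTranspose_mul, conjTranspose_conjTranspose] at key
  rwa [show Xᴴ * U * (Uᴴ * X) = Xᴴ * X by
      rw [Matrix.mul_assoc, ← Matrix.mul_assoc U, hUU, Matrix.one_mul],
    show Xᴴ * U * D * (Uᴴ * X) = Xᴴ * H * X by simp only [hH', Matrix.mul_assoc]] at key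

theorem Matrix.IsHermitian.exists_isometry_det_eq {H : Matrix (Fin m) (Fin m) ℂ}
    (hH : H.IsHermitian) {S : Finset (Fin m)} (hS : S.card = l) :
    ∃ W : Matrix (Fin m) (Fin l) ℂ,
      Wᴴ * W = 1 ∧ (Wᴴ * H * W).det = ∏ r ∈ S, (hH.eigenvalues r : ℂ) := by
  set U : Matrix (Fin m) (Fin m) ℂ := ↑hH.eigenvectorUnitary
  set g := (S.orderEmbOfFin hS).toEmbedding
  have hUU : Uᴴ * U = 1 := Unitary.star_mul_self_of_mem hH.eigenvectorUnitary.2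
  have hdiag : Uᴴ * H * U = diagonal (fun r => (hH.eigenvalues r : ℂ)) := by
    have := hH.conjStarAlgAut_star_eigenvectorUnitary
    rw [Unitary.conjStarAlgAut_star_apply] at this
    exact this
  refine ⟨U.submatrix id g, ?_, ?_⟩
  · rw [conjTranspose_submatrix, ← submatrix_mul _ _ _ id _ Function.bijective_id, hUU]
    exact submatrix_one_embedding g
  · have hcomp : Uᴴ.submatrix g id * H * U.submatrix id g = (Uᴴ * H * U).submatrix g g := by
      rw [submatrix_mul _ _ _ id _ Function.bijective_id,
        submatrix_mul _ _ _ id _ Function.bijective_id, submatrix_id_id]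
    rw [conjTranspose_submatrix, hcomp, hdiag, submatrix_diagonal_embedding, det_diagonal,
      ← map_orderEmbOfFin_univ S hS, prod_map]
    rfl

end Compression

section Horn

open Matrix
open scoped ComplexOrder

variable {m l : ℕ}

theorem sv_sq (A : Matrix (Fin m) (Fin m) ℂ) (r : Fin m) :
    sv A r ^ 2 = (isHermitian_conjTranspose_mul_self A).eigenvalues r :=
  Real.sq_sqrt ((posSemidef_conjTranspose_mul_self A).eigenvalues_nonneg r)

theorem sv_nonneg (A : Matrix (Fin m) (Fin m) ℂ) (r : Fin m) : 0 ≤ sv A r := Real.sqrt_nonneg _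

theorem re_det_conjTranspose_mul_list_prod_le (L : List (Matrix (Fin m) (Fin m) ℂ))
    (X : Matrix (Fin m) (Fin l) ℂ) :
    (Xᴴ * L.prodᴴ * L.prod * X).det.re ≤
      (L.map fun A => topProd (fun r => sv A r ^ 2) l).prod * (Xᴴ * X).det.re := by
  induction L generalizing X with
  | nil => simp
  | cons A L ih =>
    have hA := isHermitian_conjTranspose_mul_self A
    have htop : topProd (fun r => sv A r ^ 2) l = topProd hA.eigenvalues l :=
      congrArg (topProd · l) (funext (sv_sq A))
    have hL : (L.prod * X)ᴴ * (L.prod * X) = Xᴴ * L.prodᴴ * L.prod * X := by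
      simp only [conjTranspose_mul, Matrix.mul_assoc]
    calc (Xᴴ * (A :: L).prodᴴ * (A :: L).prod * X).det.re
        = ((L.prod * X)ᴴ * (Aᴴ * A) * (L.prod * X)).det.re := by
          simp only [List.prod_cons, conjTranspose_mul, Matrix.mul_assoc]
      _ ≤ topProd hA.eigenvalues l * ((L.prod * X)ᴴ * (L.prod * X)).det.re :=
          hA.re_det_conjTranspose_mul_mul_le _
      _ ≤ topProd hA.eigenvalues l *
            ((L.map fun A => topProd (fun r => sv A r ^ 2) l).prod * (Xᴴ * X).det.re) := by
          rw [hL]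
          exact mul_le_mul_of_nonneg_left (ih X)
            (topProd_nonneg (posSemidef_conjTranspose_mul_self A).eigenvalues_nonneg l)
      _ = _ := by rw [List.map_cons, List.prod_cons, htop, mul_assoc]

theorem topProd_sv_list_prod_le (L : List (Matrix (Fin m) (Fin m) ℂ)) (l : ℕ) :
    topProd (sv L.prod) l ≤ (L.map fun A => topProd (sv A) l).prod := by
  have hsq (A : Matrix (Fin m) (Fin m) ℂ) :
      topProd (fun r => sv A r ^ 2) l = topProd (sv A) l * topProd (sv A) l := by
    simpa [Real.rpow_two, sq] using topProd_rpow (sv_nonneg A) two_pos l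
  have hRHS : 0 ≤ (L.map fun A => topProd (sv A) l).prod :=
    List.prod_nonneg (by simpa using fun A _ => topProd_nonneg (sv_nonneg A) l)
  refine maxOverCard_le (fun S hS => ?_) hRHS
  obtain ⟨W, hWW, hdet⟩ := (isHermitian_conjTranspose_mul_self L.prod).exists_isometry_det_eq hS
  have key := re_det_conjTranspose_mul_list_prod_le L W
  rw [show Wᴴ * L.prodᴴ * L.prod * W = Wᴴ * (L.prodᴴ * L.prod) * W by simp only [Matrix.mul_assoc],
    hdet, hWW, det_one, Complex.one_re, mul_one, ← Complex.ofReal_prod, Complex.ofReal_re] at key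
  simp only [← sv_sq, hsq, List.prod_map_mul, prod_pow] at key
  rw [← sq] at key
  exact (pow_le_pow_iff_left₀ (prod_nonneg fun r _ => sv_nonneg _ r) hRHS two_ne_zero).mp key

end Horn

section TProduct

theorem topProd_le_topProd_of_fiberwise {κ ι : Type*} [Fintype κ] [Fintype ι]
    {x y : κ × ι → ℝ} (hx : ∀ q, 0 ≤ x q) (hy : ∀ q, 0 ≤ y q)
    (h : ∀ j, ∀ l ≤ Fintype.card ι,
      topProd (fun r => x (j, r)) l ≤ topProd (fun r => y (j, r)) l)
    (l : ℕ) : topProd x l ≤ topProd y l := by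
  classical
  refine maxOverCard_le (fun S hS => ?_) (topProd_nonneg hy l)
  set Sj : κ → Finset ι := fun j => univ.filter fun r => (j, r) ∈ S
  have hSj (q : κ × ι) : q ∈ S ↔ q.1 ∈ univ ∧ q.2 ∈ Sj q.1 := by simp [Sj]
  choose T hTcard hT using fun j =>
    exists_maxOverCard_eq (fun T => ∏ r ∈ T, y (j, r)) (Sj j).card_le_univ
  set T' : Finset (κ × ι) := univ.filter fun q => q.2 ∈ T q.1
  have hT' (q : κ × ι) : q ∈ T' ↔ q.1 ∈ univ ∧ q.2 ∈ T q.1 := by simp [T']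
  have hcard : T'.card = l := by
    rw [← hS, card_eq_sum_ones, card_eq_sum_ones S, sum_finset_product T' univ T hT',
      sum_finset_product S univ Sj hSj]
    simp [hTcard]
  calc ∏ q ∈ S, x q = ∏ j, ∏ r ∈ Sj j, x (j, r) := prod_finset_product S univ Sj hSj
    _ ≤ ∏ j, ∏ r ∈ T j, y (j, r) :=
        prod_le_prod (fun j _ => prod_nonneg fun r _ => hx _) fun j _ =>
          (le_topProd _ rfl).trans ((h j _ (card_le_univ _)).trans (hT j).le)
    _ = ∏ q ∈ T', y q := (prod_finset_product T' univ T hT').symm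
    _ ≤ topProd y l := le_topProd y hcard

theorem topProd_prod_of_antitone {α : Type*} [Fintype α] {n k : ℕ} {u : α → Fin n → ℝ}
    (hu : ∀ i, Antitone (u i)) (h0 : ∀ i r, 0 ≤ u i r) (hk : k ≤ n) :
    topProd (fun r => ∏ i, u i r) k = ∏ i, topProd (u i) k := by
  have hprod : Antitone fun r => ∏ i, u i r := fun a b hab =>
    prod_le_prod (fun i _ => h0 i b) fun i _ => hu i hab
  rw [topProd_eq_of_antitone hprod (fun r => prod_nonneg fun i _ => h0 i r) hk, prod_comm]
  exact prod_congr rfl fun i _ => (topProd_eq_of_antitone (hu i) (h0 i) hk).symm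

theorem topProd_svB_list_prod_le {M p m : ℕ} (C : Fin M → Fin p → Matrix (Fin m) (Fin m) ℂ)
    (σ : Fin M → Fin p → Equiv.Perm (Fin m)) (hσ : ∀ i j, Antitone (sv (C i j) ∘ σ i j))
    (l : ℕ) :
    topProd (svB fun j => (List.ofFn fun i => C i j).prod) l ≤
      topProd (fun q : Fin p × Fin m => ∏ i, sv (C i q.1) (σ i q.1 q.2)) l := by
  refine topProd_le_topProd_of_fiberwise (fun q => sv_nonneg _ q.2)
    (fun q => prod_nonneg fun i _ => sv_nonneg _ _) (fun j l hl => ?_) l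
  calc topProd (sv (List.ofFn fun i => C i j).prod) l ≤ ∏ i, topProd (sv (C i j)) l := by
        simpa [List.map_ofFn, List.prod_ofFn] using
          topProd_sv_list_prod_le (List.ofFn fun i => C i j) l
    _ = ∏ i, topProd (sv (C i j) ∘ σ i j) l := by simp only [topProd_comp_equiv]
    _ = topProd (fun r => ∏ i, sv (C i j) (σ i j r)) l :=
        (topProd_prod_of_antitone (fun i => hσ i j) (fun i r => sv_nonneg _ _)
          (by simpa using hl)).symm

end TProduct

theorem kyFan_holder_tproduct_general {m p M : ℕ}
    (C : Fin M → Fin p → Matrix (Fin m) (Fin m) ℂ)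
    (s : ℝ) (hs : 1 ≤ s)
    (w : Fin M → ℝ) (hw : ∀ i, 0 < w i) (hw1 : ∑ i, (w i)⁻¹ = 1)
    (k : ℕ) :
    kyFanPow (fun j => (List.ofFn (fun i => C i j)).prod) s k ≤
        ∏ i, kyFanPow (C i) (s * w i) k ^ (w i)⁻¹ ∧
      ∏ i, kyFanPow (C i) (s * w i) k ^ (w i)⁻¹ ≤
        ∑ i, kyFanPow (C i) (s * w i) k / w i := by
  have hs0 : 0 < s := zero_lt_one.trans_le hs
  choose σ hσ using fun i j => exists_perm_antitone_comp (sv (C i j))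
  let z : Fin M → Fin p × Fin m → ℝ := fun i q => sv (C i q.1) (σ i q.1 q.2)
  have hz0 (i : Fin M) (q : Fin p × Fin m) : 0 ≤ z i q := sv_nonneg _ _
  have hkyFan (i : Fin M) (e : ℝ) : topSum (fun q => z i q ^ e) k = kyFanPow (C i) e k :=
    topSum_comp_equiv (fun q => svB (C i) q ^ e) ((Equiv.refl _).prodShear (σ i)) k
  have hpow (q : Fin p × Fin m) : (∏ i, z i q) ^ s = ∏ i, (z i q ^ (s * w i)) ^ (w i)⁻¹ := by
    rw [← Real.finsetProd_rpow _ _ (fun i _ => hz0 i q)]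
    exact prod_congr rfl fun i _ => by
      rw [← Real.rpow_mul (hz0 i q), mul_inv_cancel_right₀ (hw i).ne']
  constructor
  · calc kyFanPow _ s k ≤ topSum (fun q => (∏ i, z i q) ^ s) k :=
          topSum_rpow_le_topSum_rpow_of_topProd_le
            (x := svB fun j => (List.ofFn fun i => C i j).prod) (y := fun q => ∏ i, z i q)
            (fun _ => sv_nonneg _ _) (fun q => prod_nonneg fun i _ => hz0 i q)
            (topProd_svB_list_prod_le C σ hσ) hs0 k
      _ = topSum (fun q => ∏ i, (z i q ^ (s * w i)) ^ (w i)⁻¹) k := by simp only [hpow]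
      _ ≤ ∏ i, topSum (fun q => z i q ^ (s * w i)) k ^ (w i)⁻¹ :=
          topSum_prod_rpow_le (fun i q => Real.rpow_nonneg (hz0 i q) _)
            (fun i => inv_pos.mpr (hw i)) hw1 k
      _ = _ := by simp only [hkyFan]
  · refine (Real.geom_mean_le_arith_mean_weighted univ (fun i => (w i)⁻¹) _
      (fun i _ => (inv_pos.mpr (hw i)).le) hw1
      fun i _ => topSum_nonneg (fun q => Real.rpow_nonneg (sv_nonneg _ _) _) k).trans_eq ?_
    exact sum_congr rfl fun i _ => by rw [div_eq_inv_mul]; rfl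

/-- Ky Fan `k`-norm Hölder-type inequality for T-products.
Symmetric T-product tensors `C 1, …, C M` are represented by their Hermitian DFT
blocks `C i j`; the blocks of the T-product `C 1 ⋆ ⋯ ⋆ C M` are the blockwise
products.  For `s ≥ 1` and weights `w i > 0` with `∑ 1/w i = 1`,
`‖|∏ Cᵢ|^s‖_{(k)} ≤ ∏ᵢ (‖|Cᵢ|^{s wᵢ}‖_{(k)})^{1/wᵢ} ≤ ∑ᵢ ‖|Cᵢ|^{s wᵢ}‖_{(k)}/wᵢ`. -/
theorem kyFan_holder_tproduct {m p M : ℕ}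
    (C : Fin M → Fin p → Matrix (Fin m) (Fin m) ℂ)
    (hC : ∀ i j, (C i j).IsHermitian)
    (s : ℝ) (hs : 1 ≤ s)
    (w : Fin M → ℝ) (hw : ∀ i, 0 < w i) (hw1 : ∑ i, (w i)⁻¹ = 1)
    (k : ℕ) :
    kyFanPow (fun j => (List.ofFn (fun i => C i j)).prod) s k ≤
        ∏ i, kyFanPow (C i) (s * w i) k ^ (w i)⁻¹ ∧
      ∏ i, kyFanPow (C i) (s * w i) k ^ (w i)⁻¹ ≤
        ∑ i, kyFanPow (C i) (s * w i) k / w i :=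
  kyFan_holder_tproduct_general C s hs w hw hw1 k
end
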